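/- Assume conditions (α) and (β) hold and that S*(A,H,C,G_y) ⊆ V*(A,B,E,D_z). Let S be an (A,H,C,G_y)-input containing subspace with V_m ∩ S_M ⊆ S ⊆ S_M. Then S + V_m is an (A,B,E,D_z)-self bounded subspace. -/

import Mathlib

noncomputable section

open Matrix Submodule

section GeneralDefs

variable {X U Y : Type*} [AddCommGroup X] [Module ℝ X] [AddCommGroup U] [Module ℝ U]
  [AddCommGroup Y] [Module ℝ Y]

/-- `V` is an `(A,B,C,D)`-output nulling subspace. -/
def IsOutputNulling (A : X →ₗ[ℝ] X) (B : U →ₗ[ℝ] X) (C : X →ₗ[ℝ] Y) (D : U →ₗ[ℝ] Y)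
    (V : Submodule ℝ X) : Prop :=
  ∀ v ∈ V, ∃ u : U, A v + B u ∈ V ∧ C v + D u = 0

/-- `S` is an `(A,B,C,D)`-input containing subspace. -/
def IsInputContaining (A : X →ₗ[ℝ] X) (B : U →ₗ[ℝ] X) (C : X →ₗ[ℝ] Y) (D : U →ₗ[ℝ] Y)
    (S : Submodule ℝ X) : Prop :=
  ∀ x ∈ S, ∀ u : U, C x + D u = 0 → A x + B u ∈ S

/-- `Vstar` is the largest `(A,B,C,D)`-output nulling subspace, i.e. `V*(A,B,C,D)`. -/
def IsMaxOutputNulling (A : X →ₗ[ℝ] X) (B : U →ₗ[ℝ] X) (C : X →ₗ[ℝ] Y) (D : U →ₗ[ℝ] Y)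
    (Vstar : Submodule ℝ X) : Prop :=
  IsOutputNulling A B C D Vstar ∧ ∀ V, IsOutputNulling A B C D V → V ≤ Vstar

/-- `Sstar` is the smallest `(A,B,C,D)`-input containing subspace, i.e. `S*(A,B,C,D)`. -/
def IsMinInputContaining (A : X →ₗ[ℝ] X) (B : U →ₗ[ℝ] X) (C : X →ₗ[ℝ] Y) (D : U →ₗ[ℝ] Y)
    (Sstar : Submodule ℝ X) : Prop :=
  IsInputContaining A B C D Sstar ∧ ∀ S, IsInputContaining A B C D S → Sstar ≤ S

/-- `V` is `(A,B,C,D)`-self bounded, where `Vstar` is the largest output nulling subspace: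
`V` is output nulling and `V ⊇ V* ∩ B(ker D)`. -/
def IsSelfBounded (A : X →ₗ[ℝ] X) (B : U →ₗ[ℝ] X) (C : X →ₗ[ℝ] Y) (D : U →ₗ[ℝ] Y)
    (Vstar V : Submodule ℝ X) : Prop :=
  IsOutputNulling A B C D V ∧ Vstar ⊓ (LinearMap.ker D).map B ≤ V

/-- `S` is `(A,B,C,D)`-self hidden, where `Sstar` is the smallest input containing subspace:
`S` is input containing and `S ⊆ S* + C⁻¹(im D)`. -/
def IsSelfHidden (A : X →ₗ[ℝ] X) (B : U →ₗ[ℝ] X) (C : X →ₗ[ℝ] Y) (D : U →ₗ[ℝ] Y)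
    (Sstar S : Submodule ℝ X) : Prop :=
  IsInputContaining A B C D S ∧ S ≤ Sstar ⊔ (LinearMap.range D).comap C

/-- `Vm` is the smallest `(A,B,C,D)`-self bounded subspace. -/
def IsMinSelfBounded (A : X →ₗ[ℝ] X) (B : U →ₗ[ℝ] X) (C : X →ₗ[ℝ] Y) (D : U →ₗ[ℝ] Y)
    (Vstar Vm : Submodule ℝ X) : Prop :=
  IsSelfBounded A B C D Vstar Vm ∧ ∀ V, IsSelfBounded A B C D Vstar V → Vm ≤ V

/-- `SM` is the largest `(A,B,C,D)`-self hidden subspace. -/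
def IsMaxSelfHidden (A : X →ₗ[ℝ] X) (B : U →ₗ[ℝ] X) (C : X →ₗ[ℝ] Y) (D : U →ₗ[ℝ] Y)
    (Sstar SM : Submodule ℝ X) : Prop :=
  IsSelfHidden A B C D Sstar SM ∧ ∀ S, IsSelfHidden A B C D Sstar S → S ≤ SM

end GeneralDefs

section MatrixDefs

variable {n m q p r s : ℕ}

/-- `⟨M|U⟩` : the smallest `M`-invariant subspace containing `U`. -/
def invHull (M : Matrix (Fin n) (Fin n) ℝ) (U : Submodule ℝ (Fin n → ℝ)) :
    Submodule ℝ (Fin n → ℝ) :=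
  sInf {W | U ≤ W ∧ ∀ x ∈ W, M.mulVec x ∈ W}

/-- `⟨U|M⟩` : the largest `M`-invariant subspace contained in `U`. -/
def invCore (M : Matrix (Fin n) (Fin n) ℝ) (U : Submodule ℝ (Fin n → ℝ)) :
    Submodule ℝ (Fin n → ℝ) :=
  sSup {W | W ≤ U ∧ ∀ x ∈ W, M.mulVec x ∈ W}

open scoped Classical in
/-- `σ(M | J₂/J₁)`: the multiset of complex roots (with multiplicity) of the characteristic
polynomial of the map induced by `M` on the quotient `J₂ ⧸ J₁`, for `M`-invariant `J₁ ≤ J₂`. -/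
def quotSpec (M : Matrix (Fin n) (Fin n) ℝ)
    (J₁ J₂ : Submodule ℝ (Fin n → ℝ)) : Multiset ℂ :=
  if h : J₁ ≤ J₂ ∧ (∀ x ∈ J₁, M.mulVec x ∈ J₁) ∧ (∀ x ∈ J₂, M.mulVec x ∈ J₂) then
    (((Submodule.mapQ (J₁.comap J₂.subtype) (J₁.comap J₂.subtype)
        (M.mulVecLin.restrict (p := J₂) (q := J₂) (fun x hx => h.2.2 x hx))
        (fun x hx => h.2.1 x.1 hx)).charpoly).map (algebraMap ℝ ℂ)).roots
  else 0

/-- `σ(M)`: the multiset of complex roots (with multiplicity) of the characteristic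
polynomial of the square matrix `M`. -/
def specMat {ι : Type*} [Fintype ι] [DecidableEq ι] (M : Matrix ι ι ℝ) : Multiset ℂ :=
  ((M.charpoly).map (algebraMap ℝ ℂ)).roots

/-- Condition (α). -/
def CondAlpha (B : Matrix (Fin n) (Fin m) ℝ) (H : Matrix (Fin n) (Fin q) ℝ)
    (Dz : Matrix (Fin r) (Fin m) ℝ) (Gz : Matrix (Fin r) (Fin q) ℝ)
    (V : Submodule ℝ (Fin n → ℝ)) : Prop :=
  ∀ w : Fin q → ℝ, ∃ u : Fin m → ℝ,
    H.mulVec w + B.mulVec u ∈ V ∧ Gz.mulVec w + Dz.mulVec u = 0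

/-- Condition (β). -/
def CondBeta (C : Matrix (Fin p) (Fin n) ℝ) (Gy : Matrix (Fin p) (Fin q) ℝ)
    (E : Matrix (Fin r) (Fin n) ℝ) (Gz : Matrix (Fin r) (Fin q) ℝ)
    (S : Submodule ℝ (Fin n → ℝ)) : Prop :=
  ∀ x ∈ S, ∀ w : Fin q → ℝ, C.mulVec x + Gy.mulVec w = 0 → E.mulVec x + Gz.mulVec w = 0

/-- `(S,V;K)` is a solution triple of DDPDOF. -/
def IsSolutionTriple (A : Matrix (Fin n) (Fin n) ℝ) (B : Matrix (Fin n) (Fin m) ℝ)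
    (H : Matrix (Fin n) (Fin q) ℝ) (C : Matrix (Fin p) (Fin n) ℝ)
    (Dy : Matrix (Fin p) (Fin m) ℝ) (Gy : Matrix (Fin p) (Fin q) ℝ)
    (E : Matrix (Fin r) (Fin n) ℝ) (Dz : Matrix (Fin r) (Fin m) ℝ)
    (Gz : Matrix (Fin r) (Fin q) ℝ)
    (S V : Submodule ℝ (Fin n → ℝ)) (K : Matrix (Fin m) (Fin p) ℝ) : Prop :=
  IsInputContaining A.mulVecLin H.mulVecLin C.mulVecLin Gy.mulVecLin S ∧
  IsOutputNulling A.mulVecLin B.mulVecLin E.mulVecLin Dz.mulVecLin V ∧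
  CondAlpha B H Dz Gz V ∧
  CondBeta C Gy E Gz S ∧
  S ≤ V ∧
  IsUnit (1 + K * Dy) ∧
  ∀ x ∈ S, ∀ w : Fin q → ℝ,
    (A + B * K * C).mulVec x + (H + B * K * Gy).mulVec w ∈ V ∧
    (E + Dz * K * C).mulVec x + (Gz + Dz * K * Gy).mulVec w = 0

/-- `F` is an `(A,B,E,Dz)`-output nulling friend of `V`. -/
def IsONFriend (A : Matrix (Fin n) (Fin n) ℝ) (B : Matrix (Fin n) (Fin m) ℝ)
    (E : Matrix (Fin r) (Fin n) ℝ) (Dz : Matrix (Fin r) (Fin m) ℝ)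
    (V : Submodule ℝ (Fin n → ℝ)) (F : Matrix (Fin m) (Fin n) ℝ) : Prop :=
  (∀ v ∈ V, (A + B * F).mulVec v ∈ V) ∧ ∀ v ∈ V, (E + Dz * F).mulVec v = 0

/-- `G` is an `(A,H,C,Gy)`-input containing friend of `S`. -/
def IsICFriend (A : Matrix (Fin n) (Fin n) ℝ) (H : Matrix (Fin n) (Fin q) ℝ)
    (C : Matrix (Fin p) (Fin n) ℝ) (Gy : Matrix (Fin p) (Fin q) ℝ)
    (S : Submodule ℝ (Fin n → ℝ)) (G : Matrix (Fin n) (Fin p) ℝ) : Prop :=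
  (∀ x ∈ S, (A + G * C).mulVec x ∈ S) ∧ LinearMap.range (H + G * Gy).mulVecLin ≤ S

/-- `σfix(V;F)`. -/
def sigmaFixV (A : Matrix (Fin n) (Fin n) ℝ) (B : Matrix (Fin n) (Fin m) ℝ)
    (Dz : Matrix (Fin r) (Fin m) ℝ) (V : Submodule ℝ (Fin n → ℝ))
    (F : Matrix (Fin m) (Fin n) ℝ) : Multiset ℂ :=
  quotSpec (A + B * F) (V ⊔ invHull A (LinearMap.range B.mulVecLin)) ⊤ +
  quotSpec (A + B * F)
    (invHull (A + B * F) (V ⊓ (LinearMap.ker Dz.mulVecLin).map B.mulVecLin)) V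

/-- `σfix(S;G)`. -/
def sigmaFixS (A : Matrix (Fin n) (Fin n) ℝ) (C : Matrix (Fin p) (Fin n) ℝ)
    (Gy : Matrix (Fin p) (Fin q) ℝ) (S : Submodule ℝ (Fin n → ℝ))
    (G : Matrix (Fin n) (Fin p) ℝ) : Multiset ℂ :=
  quotSpec (A + G * C) S
    (invCore (A + G * C) (S ⊔ (LinearMap.range Gy.mulVecLin).comap C.mulVecLin)) +
  quotSpec (A + G * C) ⊥ (S ⊓ invCore A (LinearMap.ker C.mulVecLin))

/-- `σfix(S,V;G,F) = σfix(V;F) ⊎ σfix(S;G)`. -/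
def sigmaFix (A : Matrix (Fin n) (Fin n) ℝ) (B : Matrix (Fin n) (Fin m) ℝ)
    (C : Matrix (Fin p) (Fin n) ℝ) (Gy : Matrix (Fin p) (Fin q) ℝ)
    (Dz : Matrix (Fin r) (Fin m) ℝ) (S V : Submodule ℝ (Fin n → ℝ))
    (G : Matrix (Fin n) (Fin p) ℝ) (F : Matrix (Fin m) (Fin n) ℝ) : Multiset ℂ :=
  sigmaFixV A B Dz V F + sigmaFixS A C Gy S G

/-- `W = (I - Dy·Dc)⁻¹`. -/
def clW (Dy : Matrix (Fin p) (Fin m) ℝ) (Dc : Matrix (Fin m) (Fin p) ℝ) :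
    Matrix (Fin p) (Fin p) ℝ := (1 - Dy * Dc)⁻¹

/-- The closed-loop matrix `Â`. -/
def clA (A : Matrix (Fin n) (Fin n) ℝ) (B : Matrix (Fin n) (Fin m) ℝ)
    (C : Matrix (Fin p) (Fin n) ℝ) (Dy : Matrix (Fin p) (Fin m) ℝ)
    (Ac : Matrix (Fin s) (Fin s) ℝ) (Bc : Matrix (Fin s) (Fin p) ℝ)
    (Cc : Matrix (Fin m) (Fin s) ℝ) (Dc : Matrix (Fin m) (Fin p) ℝ) :
    Matrix (Fin n ⊕ Fin s) (Fin n ⊕ Fin s) ℝ :=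
  Matrix.fromBlocks (A + B * Dc * clW Dy Dc * C) (B * Cc + B * Dc * clW Dy Dc * Dy * Cc)
    (Bc * clW Dy Dc * C) (Ac + Bc * clW Dy Dc * Dy * Cc)

/-- The closed-loop matrix `Ĥ`. -/
def clH (B : Matrix (Fin n) (Fin m) ℝ) (H : Matrix (Fin n) (Fin q) ℝ)
    (Dy : Matrix (Fin p) (Fin m) ℝ) (Gy : Matrix (Fin p) (Fin q) ℝ)
    (Bc : Matrix (Fin s) (Fin p) ℝ) (Dc : Matrix (Fin m) (Fin p) ℝ) :
    Matrix (Fin n ⊕ Fin s) (Fin q) ℝ :=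
  Matrix.fromRows (H + B * Dc * clW Dy Dc * Gy) (Bc * clW Dy Dc * Gy)

/-- The closed-loop matrix `Ĉ`. -/
def clC (C : Matrix (Fin p) (Fin n) ℝ) (Dy : Matrix (Fin p) (Fin m) ℝ)
    (E : Matrix (Fin r) (Fin n) ℝ) (Dz : Matrix (Fin r) (Fin m) ℝ)
    (Cc : Matrix (Fin m) (Fin s) ℝ) (Dc : Matrix (Fin m) (Fin p) ℝ) :
    Matrix (Fin r) (Fin n ⊕ Fin s) ℝ :=
  Matrix.fromCols (E + Dz * Dc * clW Dy Dc * C) (Dz * Cc + Dz * Dc * clW Dy Dc * Dy * Cc)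

/-- The closed-loop matrix `Ĝ`. -/
def clG (Dy : Matrix (Fin p) (Fin m) ℝ) (Gy : Matrix (Fin p) (Fin q) ℝ)
    (Dz : Matrix (Fin r) (Fin m) ℝ) (Gz : Matrix (Fin r) (Fin q) ℝ)
    (Dc : Matrix (Fin m) (Fin p) ℝ) : Matrix (Fin r) (Fin q) ℝ :=
  Gz + Dz * Dc * clW Dy Dc * Gy

/-- DDPDOF is solvable. -/
def DDPDOFSolvable (A : Matrix (Fin n) (Fin n) ℝ) (B : Matrix (Fin n) (Fin m) ℝ)
    (H : Matrix (Fin n) (Fin q) ℝ) (C : Matrix (Fin p) (Fin n) ℝ)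
    (Dy : Matrix (Fin p) (Fin m) ℝ) (Gy : Matrix (Fin p) (Fin q) ℝ)
    (E : Matrix (Fin r) (Fin n) ℝ) (Dz : Matrix (Fin r) (Fin m) ℝ)
    (Gz : Matrix (Fin r) (Fin q) ℝ) : Prop :=
  ∃ (s : ℕ) (Ac : Matrix (Fin s) (Fin s) ℝ) (Bc : Matrix (Fin s) (Fin p) ℝ)
    (Cc : Matrix (Fin m) (Fin s) ℝ) (Dc : Matrix (Fin m) (Fin p) ℝ),
    IsUnit (1 - Dy * Dc) ∧ clG Dy Gy Dz Gz Dc = 0 ∧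
    ∀ k : ℕ, clC C Dy E Dz Cc Dc * clA A B C Dy Ac Bc Cc Dc ^ k * clH B H Dy Gy Bc Dc = 0

end MatrixDefs

end

/-!
Being output nulling for the extended system as well, `V* ⊆ V*₁`; so by (α) every disturbance
can be cancelled by a control with `Hw + Bu ∈ V_m` (self-boundedness of `V_m` at the origin).
Hence `V_m` is already `(A,B,E,D_z)`-output nulling, and by (β) the subspace `S* ∩ V_m` is input
containing, so `S* ⊆ V_m`. Since `S_M ⊆ S*₂ + [C;E]⁻¹ im [G_y;G_z]` with `S*₂ ⊆ S* ⊆ S`, the modular law gives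
`S + V_m = (S ∩ [C;E]⁻¹ im [G_y;G_z]) + V_m`; on the first summand the measurement disturbance
can be reproduced and cancelled, which makes `S + V_m` output nulling.
-/

section OutputNulling

variable {X U Y : Type*} [AddCommGroup X] [Module ℝ X] [AddCommGroup U] [Module ℝ U]
  [AddCommGroup Y] [Module ℝ Y] {A : X →ₗ[ℝ] X} {B : U →ₗ[ℝ] X} {C : X →ₗ[ℝ] Y}
  {D : U →ₗ[ℝ] Y} {V V' : Submodule ℝ X}

def nullingPreimage (A : X →ₗ[ℝ] X) (B : U →ₗ[ℝ] X) (C : X →ₗ[ℝ] Y) (D : U →ₗ[ℝ] Y)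
    (V : Submodule ℝ X) : Submodule ℝ X where
  carrier := {x | ∃ u, A x + B u ∈ V ∧ C x + D u = 0}
  add_mem' := by
    rintro x y ⟨u, hu, hCu⟩ ⟨u', hu', hCu'⟩
    refine ⟨u + u', ?_, ?_⟩
    · simpa only [map_add, add_add_add_comm] using V.add_mem hu hu'
    · rw [map_add, map_add, add_add_add_comm, hCu, hCu', add_zero]
  zero_mem' := ⟨0, by simp⟩
  smul_mem' := by
    rintro c x ⟨u, hu, hCu⟩
    refine ⟨c • u, ?_, ?_⟩
    · simpa only [map_smul, smul_add] using V.smul_mem c hu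
    · rw [map_smul, map_smul, ← smul_add, hCu, smul_zero]

theorem isOutputNulling_iff_le_nullingPreimage :
    IsOutputNulling A B C D V ↔ V ≤ nullingPreimage A B C D V :=
  Iff.rfl

theorem nullingPreimage_mono (h : V ≤ V') :
    nullingPreimage A B C D V ≤ nullingPreimage A B C D V' :=
  fun _ ⟨u, hu, hCu⟩ => ⟨u, h hu, hCu⟩

/-- `A x + B u` differs from the step given by output nullingness of `V` by an element of
`V* ∩ B(ker D)`. -/
theorem IsSelfBounded.add_mem {Vstar : Submodule ℝ X} (hV : IsSelfBounded A B C D Vstar V)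
    (hle : V ≤ Vstar) {x : X} {u : U} (hx : x ∈ V) (hu : A x + B u ∈ Vstar)
    (hCu : C x + D u = 0) : A x + B u ∈ V := by
  obtain ⟨u₀, hu₀, hCu₀⟩ := hV.1 x hx
  have hdiff : B (u - u₀) ∈ Vstar ⊓ (LinearMap.ker D).map B := by
    have hker : u - u₀ ∈ LinearMap.ker D := by
      rw [LinearMap.mem_ker, map_sub, ← add_sub_add_left_eq_sub _ _ (C x), hCu, hCu₀, sub_zero]
    have hmem : B (u - u₀) ∈ Vstar := by
      simpa only [map_sub, add_sub_add_left_eq_sub] using Vstar.sub_mem hu (hle hu₀)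
    exact ⟨hmem, Submodule.mem_map_of_mem hker⟩
  simpa only [map_sub, add_add_sub_cancel] using V.add_mem hu₀ (hV.2 hdiff)

variable {W Z : Type*} [AddCommGroup W] [Module ℝ W] [AddCommGroup Z] [Module ℝ Z]

theorem IsOutputNulling.coprod (hV : IsOutputNulling A B C D V) (H : W →ₗ[ℝ] X)
    (G : W →ₗ[ℝ] Y) : IsOutputNulling A (B.coprod H) C (D.coprod G) V := by
  intro x hx
  obtain ⟨u, hu, hCu⟩ := hV x hx
  exact ⟨(u, 0), by simpa using hu, by simpa using hCu⟩

theorem IsOutputNulling.of_coprod {H : W →ₗ[ℝ] X} {G : W →ₗ[ℝ] Y}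
    (hV : IsOutputNulling A (B.coprod H) C (D.coprod G) V)
    (hcancel : ∀ w, ∃ u, H w + B u ∈ V ∧ G w + D u = 0) : IsOutputNulling A B C D V := by
  intro x hx
  obtain ⟨⟨u, w⟩, hu, hCu⟩ := hV x hx
  obtain ⟨u', hu', hCu'⟩ := hcancel (-w)
  refine ⟨u + u', ?_, ?_⟩
  · convert V.add_mem hu hu' using 1
    simp only [LinearMap.coprod_apply, map_add, map_neg]
    abel
  · calc C x + D (u + u') = (C x + (D.coprod G) (u, w)) + (G (-w) + D u') := by
          simp only [LinearMap.coprod_apply, map_add, map_neg]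
          abel
      _ = 0 := by rw [hCu, hCu', add_zero]

theorem map_ker_le_map_ker_coprod (H : W →ₗ[ℝ] X) (G : W →ₗ[ℝ] Y) :
    (LinearMap.ker D).map B ≤ (LinearMap.ker (D.coprod G)).map (B.coprod H) := by
  rintro _ ⟨u, hu, rfl⟩
  exact ⟨(u, 0), by simpa using hu, by simp⟩

theorem IsInputContaining.prod {S : Submodule ℝ X} (hS : IsInputContaining A B C D S)
    (E : X →ₗ[ℝ] Z) (F : U →ₗ[ℝ] Z) : IsInputContaining A B (C.prod E) (D.prod F) S :=
  fun x hx u h => hS x hx u (by simpa using congrArg Prod.fst h)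

end OutputNulling

section Disturbance

variable {X U W Y Z : Type*} [AddCommGroup X] [Module ℝ X] [AddCommGroup U] [Module ℝ U]
  [AddCommGroup W] [Module ℝ W] [AddCommGroup Y] [Module ℝ Y] [AddCommGroup Z] [Module ℝ Z]
  {A : X →ₗ[ℝ] X} {B : U →ₗ[ℝ] X} {H : W →ₗ[ℝ] X} {C : X →ₗ[ℝ] Y} {Gy : W →ₗ[ℝ] Y}
  {E : X →ₗ[ℝ] Z} {Dz : U →ₗ[ℝ] Z} {Gz : W →ₗ[ℝ] Z} {Vstar Vm : Submodule ℝ X}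

theorem IsSelfBounded.exists_add_mem_of_coprod
    (hVm : IsSelfBounded A (B.coprod H) E (Dz.coprod Gz) Vstar Vm) (hle : Vm ≤ Vstar)
    (hcancel : ∀ w, ∃ u, H w + B u ∈ Vstar ∧ Gz w + Dz u = 0) (w : W) :
    ∃ u, H w + B u ∈ Vm ∧ Gz w + Dz u = 0 := by
  obtain ⟨u, hu, hGu⟩ := hcancel w
  refine ⟨u, ?_, hGu⟩
  have h := hVm.add_mem hle (x := 0) (u := (u, w)) Vm.zero_mem
    (by simpa [add_comm] using hu) (by simpa [add_comm] using hGu)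
  simpa [add_comm] using h

theorem IsMinInputContaining.le_of_isSelfBounded {Sstar : Submodule ℝ X}
    (hSstar : IsMinInputContaining A H C Gy Sstar)
    (hVm : IsSelfBounded A (B.coprod H) E (Dz.coprod Gz) Vstar Vm) (hVm_le : Vm ≤ Vstar)
    (hle : Sstar ≤ Vstar) (hβ : ∀ x ∈ Sstar, ∀ w, C x + Gy w = 0 → E x + Gz w = 0) :
    Sstar ≤ Vm := by
  suffices IsInputContaining A H C Gy (Sstar ⊓ Vm) from (hSstar.2 _ this).trans inf_le_right
  rintro x ⟨hxS, hxV⟩ w hCw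
  have hstep := hSstar.1 x hxS w hCw
  refine ⟨hstep, ?_⟩
  simpa using hVm.add_mem hVm_le (u := (0, w)) hxV (by simpa using hle hstep)
    (by simpa using hβ x hxS w hCw)

/-- A state whose measurement equals that of a disturbance `w` is moved into `S` by injecting
`-w`, and `w` is then cancelled inside `V`. -/
theorem inf_le_nullingPreimage_sup {S V : Submodule ℝ X}
    (hS : IsInputContaining A H C Gy S)
    (hcancel : ∀ w, ∃ u, H w + B u ∈ V ∧ Gz w + Dz u = 0) :
    (LinearMap.range (Gy.prod Gz)).comap (C.prod E) ⊓ S ≤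
      nullingPreimage A B E Dz (S ⊔ V) := by
  rintro y ⟨⟨w, hw⟩, hyS⟩
  have hCy : C y = Gy w := (congrArg Prod.fst hw).symm
  have hEy : E y = Gz w := (congrArg Prod.snd hw).symm
  obtain ⟨u, hu, hGu⟩ := hcancel w
  have hreproduce : A y + H (-w) ∈ S := hS y hyS (-w) (by rw [map_neg, hCy, add_neg_cancel])
  refine ⟨u, ?_, by rw [hEy, hGu]⟩
  have hsplit : A y + B u = (A y + H (-w)) + (H w + B u) := by
    rw [map_neg]
    abel
  rw [hsplit]
  exact add_mem (Submodule.mem_sup_left hreproduce) (Submodule.mem_sup_right hu)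

end Disturbance

theorem stmt7_general {n m q p r : ℕ}
    (A : Matrix (Fin n) (Fin n) ℝ) (B : Matrix (Fin n) (Fin m) ℝ)
    (H : Matrix (Fin n) (Fin q) ℝ) (C : Matrix (Fin p) (Fin n) ℝ)
    (Gy : Matrix (Fin p) (Fin q) ℝ)
    (E : Matrix (Fin r) (Fin n) ℝ) (Dz : Matrix (Fin r) (Fin m) ℝ)
    (Gz : Matrix (Fin r) (Fin q) ℝ)
    (Vstar : Submodule ℝ (Fin n → ℝ))
    (hVstar : IsMaxOutputNulling A.mulVecLin B.mulVecLin E.mulVecLin Dz.mulVecLin Vstar)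
    (Sstar : Submodule ℝ (Fin n → ℝ))
    (hSstar : IsMinInputContaining A.mulVecLin H.mulVecLin C.mulVecLin Gy.mulVecLin Sstar)
    (Vstar1 : Submodule ℝ (Fin n → ℝ))
    (hVstar1 : IsMaxOutputNulling A.mulVecLin (B.mulVecLin.coprod H.mulVecLin) E.mulVecLin
      (Dz.mulVecLin.coprod Gz.mulVecLin) Vstar1)
    (Vm : Submodule ℝ (Fin n → ℝ))
    (hVm : IsMinSelfBounded A.mulVecLin (B.mulVecLin.coprod H.mulVecLin) E.mulVecLin
      (Dz.mulVecLin.coprod Gz.mulVecLin) Vstar1 Vm)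
    (Sstar2 : Submodule ℝ (Fin n → ℝ))
    (hSstar2 : IsMinInputContaining A.mulVecLin H.mulVecLin (C.mulVecLin.prod E.mulVecLin)
      (Gy.mulVecLin.prod Gz.mulVecLin) Sstar2)
    (SM : Submodule ℝ (Fin n → ℝ))
    (hSM : IsMaxSelfHidden A.mulVecLin H.mulVecLin (C.mulVecLin.prod E.mulVecLin)
      (Gy.mulVecLin.prod Gz.mulVecLin) Sstar2 SM)
    (hα : CondAlpha B H Dz Gz Vstar)
    (hβ : CondBeta C Gy E Gz Sstar)
    (hSV : Sstar ≤ Vstar)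
    (S : Submodule ℝ (Fin n → ℝ))
    (hS : IsInputContaining A.mulVecLin H.mulVecLin C.mulVecLin Gy.mulVecLin S)
    (hS2 : S ≤ SM) :
    IsSelfBounded A.mulVecLin B.mulVecLin E.mulVecLin Dz.mulVecLin Vstar (S ⊔ Vm) := by
  have hVs1 : Vstar ≤ Vstar1 := hVstar1.2 _ (hVstar.1.coprod _ _)
  have hVm1 : Vm ≤ Vstar1 := hVstar1.2 _ hVm.1.1
  have hcancel :=
    hVm.1.exists_add_mem_of_coprod hVm1 fun w => (hα w).imp fun _ h => ⟨hVs1 h.1, h.2⟩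
  have hVmON := isOutputNulling_iff_le_nullingPreimage.1 (hVm.1.1.of_coprod hcancel)
  have hSstarVm : Sstar ≤ Vm := hSstar.le_of_isSelfBounded hVm.1 hVm1 (hSV.trans hVs1) hβ
  have hSstar2 : Sstar2 ≤ Sstar := hSstar2.2 _ (hSstar.1.prod _ _)
  set K := (LinearMap.range (Gy.mulVecLin.prod Gz.mulVecLin)).comap (C.mulVecLin.prod E.mulVecLin)
  have hS_le : S ≤ K ⊓ S ⊔ Vm :=
    calc S ≤ (Sstar2 ⊔ K) ⊓ S := le_inf (hS2.trans hSM.1.2) le_rfl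
      _ = Sstar2 ⊔ K ⊓ S := sup_inf_assoc_of_le _ (hSstar2.trans (hSstar.2 S hS))
      _ ≤ K ⊓ S ⊔ Vm := sup_le (le_sup_of_le_right (hSstar2.trans hSstarVm)) le_sup_left
  refine ⟨?_, (inf_le_inf hVs1 (map_ker_le_map_ker_coprod _ _)).trans (hVm.1.2.trans le_sup_right)⟩
  rw [isOutputNulling_iff_le_nullingPreimage]
  calc S ⊔ Vm ≤ K ⊓ S ⊔ Vm := sup_le hS_le le_sup_right
    _ ≤ _ := sup_le (inf_le_nullingPreimage_sup hS hcancel)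
      (hVmON.trans (nullingPreimage_mono le_sup_right))

theorem stmt7 {n m q p r : ℕ}
    (A : Matrix (Fin n) (Fin n) ℝ) (B : Matrix (Fin n) (Fin m) ℝ)
    (H : Matrix (Fin n) (Fin q) ℝ) (C : Matrix (Fin p) (Fin n) ℝ)
    (Gy : Matrix (Fin p) (Fin q) ℝ)
    (E : Matrix (Fin r) (Fin n) ℝ) (Dz : Matrix (Fin r) (Fin m) ℝ)
    (Gz : Matrix (Fin r) (Fin q) ℝ)
    (Vstar : Submodule ℝ (Fin n → ℝ))
    (hVstar : IsMaxOutputNulling A.mulVecLin B.mulVecLin E.mulVecLin Dz.mulVecLin Vstar)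
    (Sstar : Submodule ℝ (Fin n → ℝ))
    (hSstar : IsMinInputContaining A.mulVecLin H.mulVecLin C.mulVecLin Gy.mulVecLin Sstar)
    (Vstar1 : Submodule ℝ (Fin n → ℝ))
    (hVstar1 : IsMaxOutputNulling A.mulVecLin (B.mulVecLin.coprod H.mulVecLin) E.mulVecLin
      (Dz.mulVecLin.coprod Gz.mulVecLin) Vstar1)
    (Vm : Submodule ℝ (Fin n → ℝ))
    (hVm : IsMinSelfBounded A.mulVecLin (B.mulVecLin.coprod H.mulVecLin) E.mulVecLin
      (Dz.mulVecLin.coprod Gz.mulVecLin) Vstar1 Vm)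
    (Sstar2 : Submodule ℝ (Fin n → ℝ))
    (hSstar2 : IsMinInputContaining A.mulVecLin H.mulVecLin (C.mulVecLin.prod E.mulVecLin)
      (Gy.mulVecLin.prod Gz.mulVecLin) Sstar2)
    (SM : Submodule ℝ (Fin n → ℝ))
    (hSM : IsMaxSelfHidden A.mulVecLin H.mulVecLin (C.mulVecLin.prod E.mulVecLin)
      (Gy.mulVecLin.prod Gz.mulVecLin) Sstar2 SM)
    (hα : CondAlpha B H Dz Gz Vstar)
    (hβ : CondBeta C Gy E Gz Sstar)
    (hSV : Sstar ≤ Vstar)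
    (S : Submodule ℝ (Fin n → ℝ))
    (hS : IsInputContaining A.mulVecLin H.mulVecLin C.mulVecLin Gy.mulVecLin S)
    (hS1 : Vm ⊓ SM ≤ S) (hS2 : S ≤ SM) :
    IsSelfBounded A.mulVecLin B.mulVecLin E.mulVecLin Dz.mulVecLin Vstar (S ⊔ Vm) :=
  stmt7_general A B H C Gy E Dz Gz Vstar hVstar Sstar hSstar Vstar1 hVstar1 Vm hVm Sstar2 hSstar2 SM
    hSM hα hβ hSV S hS hS2
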